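/- Let d ≥ 3 be an integer and let c_d = c_{d,α_d} and c_{d−2} = c_{d−2,α_{d−2}}, where α_m = 1 when m is even and α_m = π/2 when m is odd (note α_d = α_{d−2}). Then for every t ∈ ℝ, (d−1)·c_d(t) + t·c_d'(t) = (d−2)·c_{d−2}(t). -/

import Mathlib

open scoped Nat

/-- The function `c_{d,α}` of the paper: the candidate (rescaled radial profile of the)
Weyl symbol of the inverse of the harmonic oscillator, depending on a parameter `α`. -/
noncomputable def cda (d : ℕ) (α : ℝ) (t : ℝ) : ℝ :=
  ((d‼ : ℝ) / d) *
    (α * (∑' p : ℕ, t ^ (2*p) / (((2*p)‼ * (2*p + d - 1)‼ : ℕ) : ℝ)) -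
      ∑' p : ℕ, t ^ (2*p+1) / (((2*p+1)‼ * (2*p + d)‼ : ℕ) : ℝ))

/-!
Both series in `c_{d,α}` have the shape `∑ tⁿ / cₙ` with `n = 2p + r` and `cₙ ≥ p!`, so they may
be differentiated termwise, and the Euler operator `k + t d/dt` multiplies the `n`-th term by
`k + n`. For `k = d - 1` this factor `n + d - 1` is the leading factor of the double factorial
`(n + d - 1)‼` in the denominator, which thus drops to `(n + d - 3)‼`: the index `d` becomes
`d - 2`. The prefactor matches because `d‼ / d = (d - 2)‼`.
-/

theorem Nat.factorial_le_doubleFactorial {p n : ℕ} (h : 2 * p ≤ n) : p ! ≤ n‼ := by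
  induction p generalizing n with
  | zero => exact Nat.doubleFactorial_pos n
  | succ p ih =>
    obtain ⟨m, rfl⟩ : ∃ m, n = m + 2 := ⟨n - 2, by omega⟩
    rw [Nat.factorial_succ, Nat.doubleFactorial_add_two]
    exact Nat.mul_le_mul (by omega) (ih (by omega))

theorem summable_pow_two_mul_add_div_factorial (S : ℝ) (r : ℕ) :
    Summable fun p : ℕ => S ^ (2 * p + r) / p ! := by
  simpa [pow_add, pow_mul, mul_div_right_comm] using
    (Real.summable_pow_div_factorial (S ^ 2)).mul_right (S ^ r)

theorem abs_natCast_mul_pow_sub_one_le {y R : ℝ} (hR : 1 ≤ R) (hy : |y| ≤ R) (n : ℕ) :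
    |(n : ℝ) * y ^ (n - 1)| ≤ (2 * R) ^ n := by
  rw [abs_mul, Nat.abs_cast, abs_pow, mul_pow]
  have hn : (n : ℝ) ≤ 2 ^ n := by exact_mod_cast n.lt_two_pow_self.le
  have hy' : |y| ^ (n - 1) ≤ R ^ n := calc
    |y| ^ (n - 1) ≤ R ^ (n - 1) := pow_le_pow_left₀ (abs_nonneg y) hy _
    _ ≤ R ^ n := pow_le_pow_right₀ hR (Nat.sub_le n 1)
  exact mul_le_mul hn hy' (by positivity) (by positivity)

theorem mul_natCast_mul_pow_sub_one (t : ℝ) (n : ℕ) : t * (n * t ^ (n - 1)) = n * t ^ n := by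
  rcases n with _ | n
  · simp
  · rw [Nat.add_sub_cancel, pow_succ]; ring

section LacunarySeries

variable {c : ℕ → ℕ} (hc : ∀ p, p ! ≤ c p) (r : ℕ)
include hc

theorem abs_div_natCast_le_div_factorial (x : ℝ) (p : ℕ) : |x / (c p : ℝ)| ≤ |x| / p ! := by
  rw [abs_div, Nat.abs_cast]
  exact div_le_div_of_nonneg_left (abs_nonneg x) (by positivity) (by exact_mod_cast hc p)

theorem summable_pow_div (x : ℝ) : Summable fun p => x ^ (2 * p + r) / (c p : ℝ) :=
  (summable_pow_two_mul_add_div_factorial |x| r).of_norm_bounded fun p => by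
    rw [Real.norm_eq_abs, ← abs_pow]; exact abs_div_natCast_le_div_factorial hc _ p

theorem summable_deriv_pow_div (x : ℝ) :
    Summable fun p => ((2 * p + r : ℕ) : ℝ) * x ^ (2 * p + r - 1) / (c p : ℝ) :=
  (summable_pow_two_mul_add_div_factorial (2 * (|x| + 1)) r).of_norm_bounded fun p =>
    (abs_div_natCast_le_div_factorial hc _ p).trans <| by
      gcongr
      exact abs_natCast_mul_pow_sub_one_le (by linarith [abs_nonneg x]) (by linarith) _

theorem hasDerivAt_tsum_pow_div (t : ℝ) :
    HasDerivAt (fun x => ∑' p, x ^ (2 * p + r) / (c p : ℝ))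
      (∑' p, ((2 * p + r : ℕ) : ℝ) * t ^ (2 * p + r - 1) / (c p : ℝ)) t := by
  set R := |t| + 1
  have hR : 1 ≤ R := by linarith [abs_nonneg t]
  have hderiv (p : ℕ) (y : ℝ) : HasDerivAt (fun x => x ^ (2 * p + r) / (c p : ℝ))
      (((2 * p + r : ℕ) : ℝ) * y ^ (2 * p + r - 1) / (c p : ℝ)) y :=
    (hasDerivAt_pow _ y).div_const _
  have hbound (p : ℕ) (y : ℝ) (hy : y ∈ Metric.ball 0 R) :
      ‖((2 * p + r : ℕ) : ℝ) * y ^ (2 * p + r - 1) / (c p : ℝ)‖ ≤ (2 * R) ^ (2 * p + r) / p ! := by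
    rw [mem_ball_zero_iff, Real.norm_eq_abs] at hy
    exact (abs_div_natCast_le_div_factorial hc _ p).trans
      (by gcongr; exact abs_natCast_mul_pow_sub_one_le hR hy.le _)
  exact hasDerivAt_tsum_of_isPreconnected (summable_pow_two_mul_add_div_factorial (2 * R) r)
    Metric.isOpen_ball (convex_ball 0 R).isPreconnected (fun p y _ => hderiv p y) hbound
    (Metric.mem_ball_self (by linarith)) (summable_pow_div hc r 0) (by simp [R])

theorem euler_tsum_pow_div (k t : ℝ) :
    k * (∑' p, t ^ (2 * p + r) / (c p : ℝ))
        + t * deriv (fun x => ∑' p, x ^ (2 * p + r) / (c p : ℝ)) t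
      = ∑' p, (k + (2 * p + r : ℕ)) * t ^ (2 * p + r) / (c p : ℝ) := by
  rw [(hasDerivAt_tsum_pow_div hc r t).deriv, ← tsum_mul_left, ← tsum_mul_left,
    ← ((summable_pow_div hc r t).mul_left k).tsum_add
      ((summable_deriv_pow_div hc r t).mul_left t)]
  refine tsum_congr fun p => ?_
  rw [mul_div_assoc', mul_div_assoc', ← add_div, mul_natCast_mul_pow_sub_one, add_mul]

end LacunarySeries

theorem natCast_add_two_mul_div_doubleFactorial (a n : ℕ) (x : ℝ) :
    ((n + 2 : ℕ) : ℝ) * x / ((a * (n + 2)‼ : ℕ) : ℝ) = x / ((a * n‼ : ℕ) : ℝ) := by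
  rw [Nat.doubleFactorial_add_two, Nat.mul_left_comm, Nat.cast_mul ((n + 2 : ℕ))]
  exact mul_div_mul_left x _ (by positivity)

theorem cda_add_three (m : ℕ) (α : ℝ) : cda (m + 3) α = fun t => ((m + 1)‼ : ℝ) *
    (α * (∑' p : ℕ, t ^ (2 * p) / (((2 * p)‼ * (2 * p + m + 2)‼ : ℕ) : ℝ)) -
      ∑' p : ℕ, t ^ (2 * p + 1) / (((2 * p + 1)‼ * (2 * p + m + 3)‼ : ℕ) : ℝ)) := by
  have hd : ((m + 3)‼ : ℝ) / ((m + 3 : ℕ) : ℝ) = (m + 1)‼ := by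
    rw [show (m + 3)‼ = (m + 3) * (m + 1)‼ from Nat.doubleFactorial_add_two (m + 1), Nat.cast_mul]
    exact mul_div_cancel_left₀ _ (by positivity)
  have hsub (p : ℕ) : 2 * p + m + 3 - 1 = 2 * p + m + 2 := rfl
  funext t
  simp only [cda, hd, ← add_assoc, hsub]

theorem natCast_mul_cda_add_one (m : ℕ) (α t : ℝ) : ((m + 1 : ℕ) : ℝ) * cda (m + 1) α t =
    ((m + 1)‼ : ℝ) * (α * (∑' p : ℕ, t ^ (2 * p) / (((2 * p)‼ * (2 * p + m)‼ : ℕ) : ℝ)) -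
      ∑' p : ℕ, t ^ (2 * p + 1) / (((2 * p + 1)‼ * (2 * p + m + 1)‼ : ℕ) : ℝ)) := by
  have hm : ((m + 1 : ℕ) : ℝ) ≠ 0 := by positivity
  simp only [cda, ← add_assoc, Nat.add_sub_cancel, ← mul_assoc, mul_div_cancel₀ _ hm]

theorem cda_add_three_euler (m : ℕ) (α t : ℝ) :
    ((m : ℝ) + 2) * cda (m + 3) α t + t * deriv (cda (m + 3) α) t
      = ((m + 1 : ℕ) : ℝ) * cda (m + 1) α t := by
  set cA : ℕ → ℕ := fun p => (2 * p)‼ * (2 * p + m + 2)‼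
  set cB : ℕ → ℕ := fun p => (2 * p + 1)‼ * (2 * p + m + 3)‼
  have hcA (p : ℕ) : p ! ≤ cA p := (Nat.factorial_le_doubleFactorial le_rfl).trans
    (Nat.le_mul_of_pos_right _ (Nat.doubleFactorial_pos _))
  have hcB (p : ℕ) : p ! ≤ cB p := (Nat.factorial_le_doubleFactorial (by omega)).trans
    (Nat.le_mul_of_pos_right _ (Nat.doubleFactorial_pos _))
  have hA := (hasDerivAt_tsum_pow_div hcA 0 t).differentiableAt.hasDerivAt
  have hB := (hasDerivAt_tsum_pow_div hcB 1 t).differentiableAt.hasDerivAt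
  have eA := euler_tsum_pow_div hcA 0 ((m : ℝ) + 2) t
  have eB := euler_tsum_pow_div hcB 1 ((m : ℝ) + 2) t
  simp only [add_zero] at hA eA
  have hderiv : deriv (cda (m + 3) α) t = ((m + 1)‼ : ℝ) *
      (α * deriv (fun x => ∑' p, x ^ (2 * p) / (cA p : ℝ)) t
        - deriv (fun x => ∑' p, x ^ (2 * p + 1) / (cB p : ℝ)) t) := by
    rw [cda_add_three]
    exact (((hA.const_mul α).fun_sub hB).const_mul _).deriv
  have sumA : ∑' p, ((m : ℝ) + 2 + (2 * p : ℕ)) * t ^ (2 * p) / (cA p : ℝ)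
      = ∑' p, t ^ (2 * p) / (((2 * p)‼ * (2 * p + m)‼ : ℕ) : ℝ) := tsum_congr fun p => by
    convert natCast_add_two_mul_div_doubleFactorial ((2 * p)‼) (2 * p + m) (t ^ (2 * p)) using 2
    push_cast; ring
  have sumB : ∑' p, ((m : ℝ) + 2 + (2 * p + 1 : ℕ)) * t ^ (2 * p + 1) / (cB p : ℝ)
      = ∑' p, t ^ (2 * p + 1) / (((2 * p + 1)‼ * (2 * p + m + 1)‼ : ℕ) : ℝ) :=
    tsum_congr fun p => by
      convert natCast_add_two_mul_div_doubleFactorial ((2 * p + 1)‼) (2 * p + m + 1)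
        (t ^ (2 * p + 1)) using 2
      push_cast; ring
  rw [natCast_mul_cda_add_one, hderiv, cda_add_three, ← sumA, ← sumB, ← eA, ← eB]
  ring

theorem stmt18 (d : ℕ) (hd : 3 ≤ d) :
    ∀ t : ℝ,
      ((d : ℝ) - 1) * cda d (if Even d then (1:ℝ) else Real.pi / 2) t
          + t * deriv (cda d (if Even d then (1:ℝ) else Real.pi / 2)) t
        = ((d : ℝ) - 2) * cda (d - 2) (if Even (d - 2) then (1:ℝ) else Real.pi / 2) t := by
  obtain ⟨m, rfl⟩ : ∃ m, d = m + 3 := ⟨d - 3, by omega⟩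
  have hparity : Even (m + 1) ↔ Even (m + 3) := by simp [parity_simps]
  intro t
  simp only [show m + 3 - 2 = m + 1 from rfl, hparity]
  convert cda_add_three_euler m _ t using 2 <;> push_cast <;> ring
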